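/- Let G be a graph with at least 5 vertices having an edge e = vw such that both v and w have degree exactly 2. If the contraction G/e is prime, then G is prime. -/

import Mathlib

variable {V : Type*}

/-- A split of a simple graph. -/
def IsSplit (G : SimpleGraph V) (A B : Set V) : Prop :=
  A ∪ B = Set.univ ∧ Disjoint A B ∧ 2 ≤ A.ncard ∧ 2 ≤ B.ncard ∧
    ∃ A' B', A' ⊆ A ∧ B' ⊆ B ∧ ∀ x ∈ A, ∀ y ∈ B, (G.Adj x y ↔ (x ∈ A' ∧ y ∈ B'))

/-- A graph is prime if it has no split. -/
def IsPrime (G : SimpleGraph V) : Prop := ¬ ∃ A B : Set V, IsSplit G A B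

/-- Local complementation at a vertex. -/
def localComp (G : SimpleGraph V) (v : V) : SimpleGraph V where
  Adj x y := x ≠ y ∧ Xor' (G.Adj x y) (G.Adj v x ∧ G.Adj v y)
  symm := by
    constructor
    intro x y h
    refine ⟨h.1.symm, ?_⟩
    rw [SimpleGraph.adj_comm, and_comm]
    exact h.2
  loopless := by constructor; intro x h; exact h.1 rfl

/-- Pivoting an edge: G ∧ vw = G*v*w*v. -/
def pivot (G : SimpleGraph V) (v w : V) : SimpleGraph V :=
  localComp (localComp (localComp G v) w) v

/-- Vertex deletion. -/
def deleteVert (G : SimpleGraph V) (v : V) : SimpleGraph {x : V // x ≠ v} :=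
  G.induce {x | x ≠ v}

/-- Two vertices are twins if every other vertex is adjacent to one iff to the other. -/
def Twins (G : SimpleGraph V) (u w : V) : Prop :=
  ∀ x, x ≠ u → x ≠ w → (G.Adj x u ↔ G.Adj x w)

/-!
Write `N(v) = {w, a}` and `N(w) = {v, b}`. Local complementation at `v` toggles only the pair
`wa`, so `H = G*v \ v` is `G - v` with `wa` toggled. If `a = b`, then `w` is isolated in `H`,
which has at least four vertices, so `H` is not prime.

Otherwise take a split `(A, B)` of `G` with `v ∈ A`. Splits survive local complementation, and
deleting `v` keeps one as long as `|A| ≥ 3`. If `A = {v, u}`, the rectangle property of the split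
(`x ~ y` and `x' ~ y'` across it force `x ~ y'`) pins `u` down: `u = w` would give `v ~ b`; for
`u = b`, the vertices `w` and `b` are twins in `H`; for any other `u`, the only possible neighbour
of `u` in `H` is `w`. In both of the last cases a pair of vertices is one side of a split of `H`.
-/

variable {G : SimpleGraph V} {A B : Set V}

lemma Set.exists_ne_eq_pair_of_ncard_eq_two {s : Set V} {x : V} (h : s.ncard = 2) (hx : x ∈ s) :
    ∃ y, y ≠ x ∧ s = {x, y} := by
  obtain ⟨p, q, hpq, rfl⟩ := Set.ncard_eq_two.1 h
  rcases hx with rfl | rfl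
  · exact ⟨q, hpq.symm, rfl⟩
  · exact ⟨p, hpq, Set.pair_comm _ _⟩

lemma Nat.card_subtype_ne [Finite V] (v : V) : Nat.card {x // x ≠ v} = Nat.card V - 1 := by
  rw [← Set.ncard_singleton v, ← Set.ncard_compl]
  exact Nat.card_coe_set_eq {v}ᶜ

namespace IsSplit

lemma symm (h : IsSplit G A B) : IsSplit G B A := by
  obtain ⟨hU, hD, hA, hB, A', B', hA', hB', hadj⟩ := h
  refine ⟨Set.union_comm A B ▸ hU, hD.symm, hB, hA, B', A', hB', hA', fun y hy x hx => ?_⟩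
  rw [G.adj_comm, hadj x hx y hy, and_comm]

lemma mem_right_iff (h : IsSplit G A B) {x : V} : x ∈ B ↔ x ∉ A :=
  ⟨fun hB hA => h.2.1.ne_of_mem hA hB rfl,
    fun hA => (h.1 ▸ Set.mem_univ x : x ∈ A ∪ B).resolve_left hA⟩

lemma adj_of_adj_of_adj (h : IsSplit G A B) {x x' y y' : V} (hx : x ∈ A) (hx' : x' ∈ A)
    (hy : y ∈ B) (hy' : y' ∈ B) (hxy : G.Adj x y) (hxy' : G.Adj x' y') : G.Adj x y' := by
  obtain ⟨-, -, -, -, A', B', -, -, hadj⟩ := h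
  exact (hadj x hx y' hy').2 ⟨((hadj x hx y hy).1 hxy).1, ((hadj x' hx' y' hy').1 hxy').2⟩

lemma localComp (h : IsSplit G A B) (v : V) : IsSplit (localComp G v) A B := by
  wlog hvA : v ∈ A generalizing A B
  · exact (this h.symm (h.mem_right_iff.2 hvA)).symm
  obtain ⟨hU, hD, hA, hB, A', B', hA', hB', hadj⟩ := h
  refine ⟨hU, hD, hA, hB, {x | x ∈ A ∧ Xor (x ∈ A') (v ∈ A' ∧ G.Adj v x)}, B',
    fun x hx => hx.1, hB', fun x hx y hy => ?_⟩
  -- if `v ∈ A'`, the toggled edges across the split are those from `A ∩ N(v)` to `B'`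
  show x ≠ y ∧ Xor (G.Adj x y) (G.Adj v x ∧ G.Adj v y) ↔ _
  rw [hadj x hx y hy, hadj v hvA y hy]
  simp only [Set.mem_ofPred_eq, hx, true_and, ne_eq, hD.ne_of_mem hx hy, not_false_eq_true]
  grind

lemma induce (h : IsSplit G A B) {s : Set V} (hA : 2 ≤ (s ∩ A).ncard)
    (hB : 2 ≤ (s ∩ B).ncard) :
    IsSplit (G.induce s) ((↑) ⁻¹' A) ((↑) ⁻¹' B) := by
  obtain ⟨hU, hD, -, -, A', B', hA', hB', hadj⟩ := h
  have hcard (C : Set V) : (((↑) : s → V) ⁻¹' C).ncard = (s ∩ C).ncard := by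
    rw [← Subtype.image_preimage_coe, Set.ncard_image_of_injective _ Subtype.val_injective]
  refine ⟨by rw [← Set.preimage_union, hU, Set.preimage_univ], hD.preimage _,
    hcard A ▸ hA, hcard B ▸ hB, ((↑) : s → V) ⁻¹' A', ((↑) : s → V) ⁻¹' B',
    Set.preimage_mono hA', Set.preimage_mono hB', fun x hx y hy => hadj x hx y hy⟩

lemma deleteVert [Finite V] (h : IsSplit G A B) {v : V} (hvA : v ∈ A) (hA : 3 ≤ A.ncard) :
    IsSplit (deleteVert G v) ((↑) ⁻¹' A) ((↑) ⁻¹' B) := by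
  refine h.induce ?_ ?_
  · rw [show {x | x ≠ v} ∩ A = A \ {v} by ext; simp [and_comm],
      Set.ncard_sdiff_singleton_of_mem hvA]
    omega
  · rw [show {x | x ≠ v} ∩ B = B from
      Set.inter_eq_right.2 fun y hy (hyv : y = v) => h.mem_right_iff.1 (hyv ▸ hy) hvA]
    exact h.2.2.2.1

end IsSplit

lemma isSplit_pair [Finite V] (hcard : 4 ≤ Nat.card V) {p q : V} (hpq : p ≠ q) {A' B' : Set V}
    (hA' : A' ⊆ {p, q}) (hB' : B' ⊆ {p, q}ᶜ)
    (hadj : ∀ x ∈ ({p, q} : Set V), ∀ y ∉ ({p, q} : Set V),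
      G.Adj x y ↔ x ∈ A' ∧ y ∈ B') :
    IsSplit G {p, q} {p, q}ᶜ := by
  have hpair := Set.ncard_pair hpq
  refine ⟨Set.union_compl_self _, disjoint_compl_right, hpair.ge, ?_, A', B', hA', hB', hadj⟩
  rw [Set.ncard_compl, hpair]
  omega

lemma Twins.not_isPrime [Finite V] (hcard : 4 ≤ Nat.card V) {p q : V} (hpq : p ≠ q)
    (h : Twins G p q) : ¬ IsPrime G := by
  refine fun hG => hG ⟨_, _, isSplit_pair hcard hpq (A' := {p, q})
    (B' := G.neighborSet p \ {p, q}) subset_rfl (fun y hy => hy.2) fun x hx y hy => ?_⟩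
  simp only [hx, true_and, Set.mem_sdiff, hy, not_false_eq_true, and_true,
    SimpleGraph.mem_neighborSet]
  obtain rfl | rfl := hx
  · rfl
  · simp only [Set.mem_insert_iff, Set.mem_singleton_iff, not_or] at hy
    rw [G.adj_comm, G.adj_comm p, h y hy.1 hy.2]

lemma not_isPrime_of_neighborSet_subset_singleton [Finite V] (hcard : 4 ≤ Nat.card V) {p q : V}
    (hpq : p ≠ q) (h : G.neighborSet p ⊆ {q}) : ¬ IsPrime G := by
  refine fun hG => hG ⟨_, _, isSplit_pair hcard hpq (A' := {q})
    (B' := G.neighborSet q \ {p, q}) (by simp) (fun y hy => hy.2) fun x hx y hy => ?_⟩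
  simp only [Set.mem_insert_iff, Set.mem_singleton_iff, not_or] at hx hy
  obtain rfl | rfl := hx
  · simpa [hpq] using fun hxy => hy.2 (h hxy)
  · simp [hy]

lemma not_isPrime_of_neighborSet_eq_empty [Finite V] (hcard : 4 ≤ Nat.card V) {p : V}
    (h : G.neighborSet p = ∅) : ¬ IsPrime G := by
  have : Nontrivial V := Finite.one_lt_card_iff_nontrivial.1 (by omega)
  obtain ⟨q, hq⟩ := exists_ne p
  exact not_isPrime_of_neighborSet_subset_singleton hcard hq.symm (h ▸ Set.empty_subset _)

lemma adj_iff_of_neighborSet_eq_pair {v w a z : V} (hN : G.neighborSet v = {w, a}) :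
    G.Adj v z ↔ z = w ∨ z = a := by
  rw [← G.mem_neighborSet, hN]
  rfl

lemma localComp_adj_iff_of_neighborSet_eq_pair {v w a : V} (hN : G.neighborSet v = {w, a})
    (hwa : w ≠ a) (x y : V) :
    (localComp G v).Adj x y ↔ Xor (G.Adj x y) (s(x, y) = s(w, a)) := by
  show x ≠ y ∧ Xor (G.Adj x y) (G.Adj v x ∧ G.Adj v y) ↔ _
  rw [adj_iff_of_neighborSet_eq_pair hN, adj_iff_of_neighborSet_eq_pair hN, Sym2.eq_iff]
  grind [SimpleGraph.irrefl]

section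

variable {v w a b : V}

lemma neighborSet_deleteVert_localComp_eq_empty_of_triangle (hNv : G.neighborSet v = {w, a})
    (hNw : G.neighborSet w = {v, a}) (haw : a ≠ w) (hwv : w ≠ v) :
    (deleteVert (localComp G v) v).neighborSet ⟨w, hwv⟩ = ∅ := by
  refine Set.eq_empty_of_forall_notMem fun y hy => ?_
  have := (localComp_adj_iff_of_neighborSet_eq_pair hNv haw.symm w y).1 hy
  rw [adj_iff_of_neighborSet_eq_pair hNw, Sym2.congr_right] at this
  simp [y.2] at this

lemma not_isSplit_pair_of_neighborSet_eq_pair (hNv : G.neighborSet v = {w, a})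
    (hNw : G.neighborSet w = {v, b}) (haw : a ≠ w) (hab : a ≠ b) (hbv : b ≠ v) :
    ¬ IsSplit G {v, w} B := by
  intro h
  have hB (z : V) : z ∈ B ↔ z ≠ v ∧ z ≠ w := by simp [h.mem_right_iff]
  have hva := (adj_iff_of_neighborSet_eq_pair hNv).2 (.inr rfl)
  have hwb := (adj_iff_of_neighborSet_eq_pair hNw).2 (.inr rfl)
  have hvb := h.adj_of_adj_of_adj (by simp) (by simp) ((hB a).2 ⟨hva.ne', haw⟩)
    ((hB b).2 ⟨hbv, hwb.ne'⟩) hva hwb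
  rcases (adj_iff_of_neighborSet_eq_pair hNv).1 hvb with e | e
  exacts [hwb.ne' e, hab e.symm]

lemma twins_deleteVert_localComp_of_isSplit_pair (hNv : G.neighborSet v = {w, a})
    (hNw : G.neighborSet w = {v, b}) (haw : a ≠ w) (hab : a ≠ b) (hwv : w ≠ v) (hbv : b ≠ v)
    (h : IsSplit G {v, b} B) : Twins (deleteVert (localComp G v) v) ⟨w, hwv⟩ ⟨b, hbv⟩ := by
  intro x hxw hxb
  replace hxw : x.1 ≠ w := fun e => hxw (Subtype.ext e)
  replace hxb : x.1 ≠ b := fun e => hxb (Subtype.ext e)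
  have hB (z : V) : z ∈ B ↔ z ≠ v ∧ z ≠ b := by simp [h.mem_right_iff]
  have hva := (adj_iff_of_neighborSet_eq_pair hNv).2 (.inr rfl)
  have hvw := (adj_iff_of_neighborSet_eq_pair hNv).2 (.inl rfl)
  have hwb := (adj_iff_of_neighborSet_eq_pair hNw).2 (.inr rfl)
  have hwB : w ∈ B := (hB w).2 ⟨hwv, hwb.ne⟩
  have hxw' : ¬ G.Adj x w := fun hx => by
    rcases (adj_iff_of_neighborSet_eq_pair hNw).1 hx.symm with e | e
    exacts [x.2 e, hxb e]
  have hxb' : s(x.1, b) ≠ s(w, a) := by simp [hxw, hwb.ne']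
  change (localComp G v).Adj x w ↔ (localComp G v).Adj x b
  rw [localComp_adj_iff_of_neighborSet_eq_pair hNv haw.symm,
    localComp_adj_iff_of_neighborSet_eq_pair hNv haw.symm, Sym2.eq_swap, Sym2.congr_right]
  simp only [hxw', hxb', xor_def, false_and, and_true, not_false_eq_true, false_or, or_false]
  constructor
  · intro hxa
    rw [hxa]
    exact (h.adj_of_adj_of_adj (by simp) (by simp) hwB ((hB a).2 ⟨hva.ne', hab⟩) hwb.symm
      hva).symm
  · intro hx
    have hvx := h.adj_of_adj_of_adj (by simp) (by simp) hwB ((hB x).2 ⟨x.2, hxb⟩) hvw hx.symm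
    exact ((adj_iff_of_neighborSet_eq_pair hNv).1 hvx).resolve_left hxw

lemma neighborSet_deleteVert_localComp_subset_of_isSplit_pair {u : V}
    (hNv : G.neighborSet v = {w, a}) (hNw : G.neighborSet w = {v, b}) (haw : a ≠ w)
    (huv : u ≠ v) (hwv : w ≠ v) (huw : u ≠ w) (hub : u ≠ b) (h : IsSplit G {v, u} B) :
    (deleteVert (localComp G v) v).neighborSet ⟨u, huv⟩ ⊆ {⟨w, hwv⟩} := by
  intro y hy
  by_contra hyw
  replace hyw : y.1 ≠ w := fun e => hyw (Subtype.ext e)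
  have huy : G.Adj u y := by
    have := (localComp_adj_iff_of_neighborSet_eq_pair hNv haw.symm u y).1 hy
    simpa [Sym2.eq_iff, hyw, huw, xor_def] using this
  have hyB : y.1 ∈ B := h.mem_right_iff.2 (by simp [y.2, huy.ne'])
  have hwB : w ∈ B := h.mem_right_iff.2 (by simp [hwv, huw.symm])
  have huw' := h.adj_of_adj_of_adj (by simp) (by simp) hyB hwB huy
    ((adj_iff_of_neighborSet_eq_pair hNv).2 (.inl rfl))
  rcases (adj_iff_of_neighborSet_eq_pair hNw).1 huw'.symm with e | e
  exacts [huv e, hub e]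

end

/-- if G has at least 5 vertices and an edge vw whose ends both have degree
exactly 2, and the contraction G/vw (≅ G*v ∖ v) is prime, then G is prime. -/
theorem prime_of_contraction_prime {V : Type*} [Finite V] (G : SimpleGraph V)
    (hcard : 5 ≤ Nat.card V) (v w : V) (hadj : G.Adj v w)
    (hv : (G.neighborSet v).ncard = 2) (hw : (G.neighborSet w).ncard = 2)
    (hcon : IsPrime (deleteVert (localComp G v) v)) :
    IsPrime G := by
  obtain ⟨a, haw, hNv⟩ := Set.exists_ne_eq_pair_of_ncard_eq_two hv hadj
  obtain ⟨b, hbv, hNw⟩ := Set.exists_ne_eq_pair_of_ncard_eq_two hw hadj.symm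
  have hwv := hadj.ne'
  have hcardH : 4 ≤ Nat.card {x // x ≠ v} := by rw [Nat.card_subtype_ne]; omega
  obtain rfl | hab := eq_or_ne a b
  · exact absurd hcon <| not_isPrime_of_neighborSet_eq_empty hcardH
      (neighborSet_deleteVert_localComp_eq_empty_of_triangle hNv hNw haw hwv)
  rintro ⟨A, B, hAB⟩
  wlog hvA : v ∈ A generalizing A B
  · exact this B A hAB.symm (hAB.mem_right_iff.2 hvA)
  obtain hA | hA : 3 ≤ A.ncard ∨ A.ncard = 2 := by have := hAB.2.2.1; omega
  · exact hcon ⟨_, _, (hAB.localComp v).deleteVert hvA hA⟩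
  obtain ⟨u, huv, rfl⟩ := Set.exists_ne_eq_pair_of_ncard_eq_two hA hvA
  obtain rfl | huw := eq_or_ne u w
  · exact not_isSplit_pair_of_neighborSet_eq_pair hNv hNw haw hab hbv hAB
  obtain rfl | hub := eq_or_ne u b
  · exact (twins_deleteVert_localComp_of_isSplit_pair hNv hNw haw hab hwv huv hAB).not_isPrime
      hcardH (by simpa using huw.symm) hcon
  · exact not_isPrime_of_neighborSet_subset_singleton hcardH (by simpa using huw)
      (neighborSet_deleteVert_localComp_subset_of_isSplit_pair hNv hNw haw huv hwv huw hub hAB) hcon
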